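/- In the setting of the previous statement with the translational gauge B_{α̂1} = B_{α̂2} = 0, the relation C_{α̂ĵ} = B_{α̂î} Q_{îĵ} (î,ĵ ∈ {3,…,n}, Q the tridiagonal matrix above) forces the remaining two columns of C to equal C_{α̂1} = B_{α̂n}/⟨n1⟩ = Σ_{j=3}^{n} (⟨2j⟩/⟨12⟩) C_{α̂j} and C_{α̂2} = B_{α̂3}/⟨23⟩ = −Σ_{j=3}^{n} (⟨1j⟩/⟨12⟩) C_{α̂j}; consequently Σ_{i=1}^{n} C_{α̂ i} λ_i = 0. -/

import Mathlib

/-- The angle bracket `⟨ij⟩ = λ_i^1 λ_j^2 - λ_i^2 λ_j^1`, for spinors indexed cyclically. -/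
def ang {n : ℕ} (lam : ZMod n → Fin 2 → ℂ) (i j : ZMod n) : ℂ :=
  lam i 0 * lam j 1 - lam i 1 * lam j 0

/-- The `k × n` matrix `C` with
`C_{α̂ i} = (⟨i,i+1⟩ B_{α̂,i−1} + ⟨i−1,i⟩ B_{α̂,i+1} + ⟨i+1,i−1⟩ B_{α̂ i}) / (⟨i−1,i⟩⟨i,i+1⟩)`. -/
noncomputable def Cmat {n k : ℕ} (lam : ZMod n → Fin 2 → ℂ) (Brow : Fin k → ZMod n → ℂ) :
    Fin k → ZMod n → ℂ := fun a i =>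
  (ang lam i (i + 1) * Brow a (i - 1) + ang lam (i - 1) i * Brow a (i + 1)
      + ang lam (i + 1) (i - 1) * Brow a i) / (ang lam (i - 1) i * ang lam i (i + 1))


/-!
Schouten's identity `⟨i,i+1⟩ λ_{i−1} + ⟨i+1,i−1⟩ λ_i + ⟨i−1,i⟩ λ_{i+1} = 0` turns each term
`C_{α̂ i} λ_i` into a difference `D_{i−1} − D_i`, so `Σ_i C_{α̂ i} λ_i = 0` by telescoping around
the cycle. Contracting this vector identity with `λ_1` and `λ_2` gives two scalar relations, which
isolate `C_{α̂ 2}` and `C_{α̂ 1}` once the gauge `B_{α̂ 1} = B_{α̂ 2} = 0` is imposed; the same gauge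
reduces the defining formula of `C_{α̂ 1}` and `C_{α̂ 2}` to a single term.
-/

open Finset

namespace ZMod

variable {M : Type*} [AddCommMonoid M] {n : ℕ} [NeZero n]

theorem sum_eq_sum_range_natCast (g : ZMod n → M) : ∑ i, g i = ∑ j ∈ range n, g j :=
  sum_nbij' val (↑) (fun i _ => mem_range.2 (val_lt i)) (fun _ _ => mem_univ _)
    (fun i _ => natCast_zmod_val i) (fun _ hj => val_cast_of_lt (mem_range.1 hj))
    (fun i _ => by rw [natCast_zmod_val])

theorem sum_natCast_Icc_one (g : ZMod n → M) : ∑ j ∈ Icc 1 n, g j = ∑ i, g i := by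
  rw [← Ico_add_one_right_eq_Icc, sum_Ico_eq_sum_range, Nat.add_sub_cancel]
  calc ∑ k ∈ range n, g ((1 + k : ℕ) : ZMod n)
      = ∑ k ∈ range n, g (1 + (k : ZMod n)) := by push_cast; rfl
    _ = ∑ i, g (1 + i) := (sum_eq_sum_range_natCast fun i => g (1 + i)).symm
    _ = ∑ i, g i := Equiv.sum_comp (Equiv.addLeft 1) g

theorem add_add_sum_natCast_Icc_three (hn : 2 ≤ n) (g : ZMod n → M) :
    g 1 + g 2 + ∑ j ∈ Icc 3 n, g j = ∑ i, g i := by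
  rw [← sum_natCast_Icc_one, ← add_sum_Ioc_eq_sum_Icc (by omega : 1 ≤ n),
    show Ioc 1 n = Icc 2 n from (Icc_add_one_left_eq_Ioc 1 n).symm, ← add_sum_Ioc_eq_sum_Icc hn,
    show Ioc 2 n = Icc 3 n from (Icc_add_one_left_eq_Ioc 2 n).symm]
  simp only [Nat.cast_one, Nat.cast_ofNat, add_assoc]

end ZMod

section Brackets

variable {n k : ℕ} (lam : ZMod n → Fin 2 → ℂ) (Brow : Fin k → ZMod n → ℂ)

theorem ang_self (i : ZMod n) : ang lam i i = 0 := by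
  rw [ang]; ring

theorem ang_swap (i j : ZMod n) : ang lam j i = -ang lam i j := by
  simp only [ang]; ring

theorem sum_ang_mul_eq_zero_of_sum_smul_eq_zero [NeZero n] {x : ZMod n → ℂ}
    (h : ∑ i, x i • lam i = 0) (c : ZMod n) : ∑ i, ang lam c i * x i = 0 := by
  have h0 : ∑ i, x i * lam i 0 = 0 := by simpa using congrFun h 0
  have h1 : ∑ i, x i * lam i 1 = 0 := by simpa using congrFun h 1
  calc ∑ i, ang lam c i * x i
      = lam c 0 * ∑ i, x i * lam i 1 - lam c 1 * ∑ i, x i * lam i 0 := by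
        rw [mul_sum, mul_sum, ← sum_sub_distrib]
        exact sum_congr rfl fun i _ => by rw [ang]; ring
    _ = 0 := by rw [h0, h1]; ring

/-- `D_j = (B_{α̂ j} λ_{j+1} − B_{α̂,j+1} λ_j) / ⟨j,j+1⟩`, the term that Schouten's identity makes
`C_{α̂ i} λ_i` telescope into. -/
noncomputable def Cflux (a : Fin k) (j : ZMod n) : Fin 2 → ℂ :=
  (ang lam j (j + 1))⁻¹ • (Brow a j • lam (j + 1) - Brow a (j + 1) • lam j)

variable {lam}

theorem Cmat_smul_eq_Cflux_sub (a : Fin k) {i : ZMod n}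
    (hprev : ang lam (i - 1) i ≠ 0) (hnext : ang lam i (i + 1) ≠ 0) :
    Cmat lam Brow a i • lam i = Cflux lam Brow a (i - 1) - Cflux lam Brow a i := by
  funext x
  simp only [Cmat, Cflux, sub_add_cancel, Pi.sub_apply, Pi.smul_apply, smul_eq_mul]
  field_simp
  fin_cases x <;> simp only [ang, Fin.zero_eta, Fin.mk_one] <;> ring

theorem sum_Cmat_smul_eq_zero [NeZero n] (hang : ∀ i : ZMod n, ang lam i (i + 1) ≠ 0)
    (a : Fin k) : ∑ i, Cmat lam Brow a i • lam i = 0 := by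
  have hprev (i : ZMod n) : ang lam (i - 1) i ≠ 0 := by simpa using hang (i - 1)
  rw [sum_congr rfl fun i _ => Cmat_smul_eq_Cflux_sub Brow a (hprev i) (hang i),
    sum_sub_distrib, sub_eq_zero]
  exact Equiv.sum_comp (Equiv.subRight 1) (Cflux lam Brow a)

theorem ang_mul_Cmat_add_sum_Icc_three [NeZero n] (hn : 2 ≤ n)
    (hang : ∀ i : ZMod n, ang lam i (i + 1) ≠ 0) (a : Fin k) (c : ZMod n) :
    ang lam c 1 * Cmat lam Brow a 1 + ang lam c 2 * Cmat lam Brow a 2 +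
      ∑ j ∈ Icc 3 n, ang lam c j * Cmat lam Brow a j = 0 := by
  rw [ZMod.add_add_sum_natCast_Icc_three hn (fun i => ang lam c i * Cmat lam Brow a i)]
  exact sum_ang_mul_eq_zero_of_sum_smul_eq_zero lam (sum_Cmat_smul_eq_zero Brow hang a) c

theorem Cmat_eq_of_Brow_eq_zero_of_Brow_succ_eq_zero {a : Fin k} {i : ZMod n}
    (hnext : ang lam i (i + 1) ≠ 0) (hi : Brow a i = 0) (hsucc : Brow a (i + 1) = 0) :
    Cmat lam Brow a i = Brow a (i - 1) / ang lam (i - 1) i := by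
  rw [Cmat, hi, hsucc, mul_zero, mul_zero, add_zero, add_zero, mul_comm (ang lam (i - 1) i),
    mul_div_mul_left _ _ hnext]

theorem Cmat_eq_of_Brow_pred_eq_zero_of_Brow_eq_zero {a : Fin k} {i : ZMod n}
    (hprev : ang lam (i - 1) i ≠ 0) (hpred : Brow a (i - 1) = 0) (hi : Brow a i = 0) :
    Cmat lam Brow a i = Brow a (i + 1) / ang lam i (i + 1) := by
  rw [Cmat, hi, hpred, mul_zero, mul_zero, zero_add, add_zero, mul_div_mul_left _ _ hprev]

end Brackets

/-- In the translational gauge `B_{α̂1} = B_{α̂2} = 0`, the remaining two columns of `C`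
satisfy `C_{α̂1} = B_{α̂n}/⟨n1⟩ = Σ_{j=3}^{n} (⟨2j⟩/⟨12⟩) C_{α̂j}` and
`C_{α̂2} = B_{α̂3}/⟨23⟩ = −Σ_{j=3}^{n} (⟨1j⟩/⟨12⟩) C_{α̂j}`; consequently
`Σ_{i=1}^{n} C_{α̂ i} λ_i = 0`. -/
theorem Cmat_gauge_fixed_columns {n k : ℕ} [NeZero n] (hn : 4 ≤ n)
    (lam : ZMod n → Fin 2 → ℂ) (Brow : Fin k → ZMod n → ℂ)
    (hang : ∀ i : ZMod n, ang lam i (i + 1) ≠ 0) (h12 : ang lam 1 2 ≠ 0)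
    (hB1 : ∀ a, Brow a 1 = 0) (hB2 : ∀ a, Brow a 2 = 0) :
    (∀ a, Cmat lam Brow a 1 = Brow a ((n : ℕ) : ZMod n) / ang lam ((n : ℕ) : ZMod n) 1) ∧
    (∀ a, Cmat lam Brow a 1 =
      ∑ j ∈ Finset.Icc 3 n, (ang lam 2 ((j : ℕ) : ZMod n) / ang lam 1 2) *
        Cmat lam Brow a ((j : ℕ) : ZMod n)) ∧
    (∀ a, Cmat lam Brow a 2 = Brow a 3 / ang lam 2 3) ∧
    (∀ a, Cmat lam Brow a 2 =
      -∑ j ∈ Finset.Icc 3 n, (ang lam 1 ((j : ℕ) : ZMod n) / ang lam 1 2) *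
        Cmat lam Brow a ((j : ℕ) : ZMod n)) ∧
    (∀ a, ∑ i : ZMod n, Cmat lam Brow a i • lam i = 0) := by
  have h21 : (1 : ZMod n) + 1 = 2 := one_add_one_eq_two
  have h32 : (2 : ZMod n) + 1 = 3 := two_add_one_eq_three
  have h12' : ang lam (2 - 1) 2 ≠ 0 := by rw [← h21, add_sub_cancel_right]; exact hang 1
  have hrel := ang_mul_Cmat_add_sum_Icc_three Brow (by omega) hang
  refine ⟨fun a => ?_, fun a => ?_, fun a => ?_, fun a => ?_, sum_Cmat_smul_eq_zero Brow hang⟩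
  · rw [Cmat_eq_of_Brow_eq_zero_of_Brow_succ_eq_zero Brow (i := 1) (hang 1) (hB1 a)
      (by rw [h21, hB2 a]), ZMod.natCast_self, sub_self]
  · have h := hrel a 2
    rw [ang_self, ang_swap lam 1 2] at h
    simp only [div_mul_eq_mul_div, ← sum_div]
    rw [eq_div_iff h12]
    linear_combination -h
  · rw [Cmat_eq_of_Brow_pred_eq_zero_of_Brow_eq_zero Brow h12'
      (by rw [← h21, add_sub_cancel_right, hB1 a]) (hB2 a), h32]
  · have h := hrel a 1
    rw [ang_self] at h
    simp only [div_mul_eq_mul_div, ← sum_div]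
    rw [← neg_div, eq_div_iff h12]
    linear_combination h
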